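/- For every k ≥ 0, let w_{k,n} denote the number of (unconstrained) weighted Motzkin paths of length n with total increment −k. Then Σ_{n≥0} w_{k,n}·z^n = B·D^k in ℤ[[z]], where D := Σ_{n≥1} d_n·z^n and B := Σ_{n≥0} b_n·z^n. (This is the statement that the generating series of weighted Motzkin paths going from height i to height j is B·D^{|i−j|}; by the up–down symmetry of the step set the case of total increment +k is identical.) -/

import Mathlib

/-!
Since no step goes down by more than one, a path of total increment `-(k + 1)` passes through
height `-1`. Cutting it at the first such time splits it uniquely into a path counted by `d` and
a path of increment `-k`. Hence the series `W_k` of paths of increment `-k` satisfy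
`W_{k+1} = D · W_k`, and `W_0 = B`.
-/

/-- A weighted Motzkin step: an up step, a down step, or one of four distinguishable
horizontal steps. -/
inductive WStep : Type
  | up : WStep
  | down : WStep
  | h1 : WStep
  | h2 : WStep
  | h3 : WStep
  | h4 : WStep

/-- The height increment of a weighted Motzkin step. -/
def WStep.inc : WStep → ℤ
  | .up => 1
  | .down => -1
  | _ => 0

/-- The total height increment of a weighted Motzkin path. -/
def hsum (p : List WStep) : ℤ := (p.map WStep.inc).sum

/-- `dnum n` : number of weighted Motzkin paths of length `n` with total increment `-1`
whose proper partial heights (after each step except the last) are all nonnegative. -/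
noncomputable def dnum (n : ℕ) : ℕ :=
  Nat.card {p : List WStep // p.length = n ∧ hsum p = -1 ∧
    ∀ i < n, 0 ≤ hsum (p.take i)}

/-- `bnum n` : number of unconstrained weighted Motzkin paths of length `n` with total
increment `0`. -/
noncomputable def bnum (n : ℕ) : ℕ :=
  Nat.card {p : List WStep // p.length = n ∧ hsum p = 0}

/-- The generating series `D = Σ_{n≥1} d_n z^n`. -/
noncomputable def Dser : PowerSeries ℤ := PowerSeries.mk fun n => (dnum n : ℤ)

/-- The generating series `B = Σ_{n≥0} b_n z^n`. -/
noncomputable def Bser : PowerSeries ℤ := PowerSeries.mk fun n => (bnum n : ℤ)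


/-- `wnum k n` : number of unconstrained weighted Motzkin paths of length `n` with total
increment `-k`. -/
noncomputable def wnum (k n : ℕ) : ℕ :=
  Nat.card {p : List WStep // p.length = n ∧ hsum p = -(k : ℤ)}

open Finset PowerSeries

deriving instance DecidableEq for WStep

instance : Fintype WStep :=
  ⟨{.up, .down, .h1, .h2, .h3, .h4}, fun s => by cases s <;> simp⟩

instance List.finite_length_eq_and {α : Type*} [Finite α] (n : ℕ) (P : List α → Prop) :
    Finite {p : List α // p.length = n ∧ P p} :=
  ((List.finite_length_eq α n).subset fun _ hp => hp.1).to_subtype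

lemma Int.exists_first_eq_neg_one {f : ℕ → ℤ} (h0 : 0 ≤ f 0) (hstep : ∀ i, f i - 1 ≤ f (i + 1))
    {N : ℕ} (hN : f N < 0) : ∃ m ≤ N, f m = -1 ∧ ∀ i < m, 0 ≤ f i := by
  classical
  have hex : ∃ m, f m < 0 := ⟨N, hN⟩
  obtain ⟨j, hj⟩ : ∃ j, Nat.find hex = j + 1 :=
    Nat.exists_eq_succ_of_ne_zero fun h => (h ▸ Nat.find_spec hex).not_ge h0
  have hbefore : ∀ i < j + 1, 0 ≤ f i := fun i hi => not_lt.1 (Nat.find_min hex (hj ▸ hi))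
  have hhit : f (j + 1) < 0 := hj ▸ Nat.find_spec hex
  refine ⟨j + 1, hj ▸ Nat.find_min' hex hN, ?_, hbefore⟩
  have := hstep j
  have := hbefore j j.lt_succ_self
  omega

lemma hsum_append (p q : List WStep) : hsum (p ++ q) = hsum p + hsum q := by
  simp [hsum]

lemma hsum_take_sub_one_le (p : List WStep) (i : ℕ) :
    hsum (p.take i) - 1 ≤ hsum (p.take (i + 1)) := by
  rw [List.take_add_one, hsum_append]
  cases p[i]? with
  | none => simp [hsum]
  | some s =>
    cases s <;> simp [hsum, WStep.inc]
    omega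

def IsFirstPassage (p : List WStep) : Prop :=
  hsum p = -1 ∧ ∀ i < p.length, 0 ≤ hsum (p.take i)

lemma IsFirstPassage.eq_of_prefix {q p : List WStep} (hq : IsFirstPassage q)
    (hp : IsFirstPassage p) (h : q <+: p) : q = p := by
  refine h.eq_of_length (le_antisymm h.length_le (not_lt.1 fun hlt => ?_))
  have := hp.2 _ hlt
  rw [← List.prefix_iff_eq_take.1 h, hq.1] at this
  omega

lemma IsFirstPassage.eq_of_append_eq {q₁ r₁ q₂ r₂ : List WStep} (hq₁ : IsFirstPassage q₁)
    (hq₂ : IsFirstPassage q₂) (h : q₁ ++ r₁ = q₂ ++ r₂) : q₁ = q₂ := by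
  have hpre : q₂ <+: q₁ ++ r₁ := h ▸ List.prefix_append q₂ r₂
  rcases List.prefix_or_prefix_of_prefix (List.prefix_append q₁ r₁) hpre with h' | h'
  · exact hq₁.eq_of_prefix hq₂ h'
  · exact (hq₂.eq_of_prefix hq₁ h').symm

lemma exists_append_of_hsum_neg {p : List WStep} (hp : hsum p < 0) :
    ∃ q r, p = q ++ r ∧ IsFirstPassage q := by
  obtain ⟨m, -, hm, hbefore⟩ := Int.exists_first_eq_neg_one (f := fun i => hsum (p.take i))
    (by simp [hsum]) (hsum_take_sub_one_le p) (N := p.length) (by simpa using hp)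
  refine ⟨p.take m, p.drop m, (List.take_append_drop m p).symm, hm, fun i hi => ?_⟩
  rw [List.take_take, min_eq_left (by simp at hi; omega)]
  exact hbefore i (by simp at hi; omega)

abbrev FirstPassages (n : ℕ) := {p : List WStep // p.length = n ∧ IsFirstPassage p}

abbrev PathsWithIncrement (n : ℕ) (h : ℤ) := {p : List WStep // p.length = n ∧ hsum p = h}

lemma dnum_eq_card (n : ℕ) : dnum n = Nat.card (FirstPassages n) :=
  Nat.card_congr <| Equiv.subtypeEquivRight fun p =>
    and_congr_right fun hp => by rw [IsFirstPassage, hp]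

def appendPassage (k n : ℕ) :
    (Σ m : antidiagonal n, FirstPassages m.1.1 × PathsWithIncrement m.1.2 (-k)) →
      PathsWithIncrement n (-(k + 1 : ℕ))
  | ⟨m, q, r⟩ => ⟨q.1 ++ r.1, by
      rw [List.length_append, q.2.1, r.2.1, mem_antidiagonal.1 m.2], by
      rw [hsum_append, q.2.2.1, r.2.2]; push_cast; ring⟩

lemma appendPassage_bijective (k n : ℕ) : Function.Bijective (appendPassage k n) := by
  constructor
  · rintro ⟨m₁, q₁, r₁⟩ ⟨m₂, q₂, r₂⟩ h
    have happ : q₁.1 ++ r₁.1 = q₂.1 ++ r₂.1 := congrArg Subtype.val h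
    have hq : q₁.1 = q₂.1 := q₁.2.2.eq_of_append_eq q₂.2.2 happ
    have hr : r₁.1 = r₂.1 := List.append_cancel_left (hq ▸ happ)
    obtain rfl : m₁ = m₂ := Subtype.ext <| Prod.ext
      (q₁.2.1.symm.trans (hq ▸ q₂.2.1)) (r₁.2.1.symm.trans (hr ▸ r₂.2.1))
    obtain rfl := Subtype.ext hq
    obtain rfl := Subtype.ext hr
    rfl
  · rintro ⟨p, hlen, hinc⟩
    obtain ⟨q, r, rfl, hq⟩ := exists_append_of_hsum_neg (p := p) (by omega)
    have hr : hsum r = -k := by rw [hsum_append, hq.1] at hinc; push_cast at hinc; omega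
    exact ⟨⟨⟨(q.length, r.length), by simpa using hlen⟩, ⟨q, rfl, hq⟩, ⟨r, rfl, hr⟩⟩, rfl⟩

lemma wnum_succ (k n : ℕ) : wnum (k + 1) n = ∑ m ∈ antidiagonal n, dnum m.1 * wnum k m.2 := by
  rw [wnum, ← Nat.card_eq_of_bijective _ (appendPassage_bijective k n), Nat.card_sigma]
  simp only [Nat.card_prod, ← dnum_eq_card]
  exact sum_coe_sort (antidiagonal n) fun m => dnum m.1 * wnum k m.2

lemma mk_wnum_succ (k : ℕ) :
    (mk fun n => (wnum (k + 1) n : ℤ)) = Dser * mk fun n => (wnum k n : ℤ) := by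
  ext n
  simp [coeff_mul, Dser, wnum_succ]

/-- The generating series of weighted Motzkin paths of total increment `-k` is `B·D^k`. -/
theorem motzkin_paths_increment_k (k : ℕ) :
    (PowerSeries.mk fun n => (wnum k n : ℤ)) = Bser * Dser ^ k := by
  induction k with
  | zero => simp [Bser, wnum, bnum]
  | succ k ih => rw [mk_wnum_succ, ih, pow_succ]; ring
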